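/- Let distributions Q_1,...,Q_t on ℝ have continuous CDFs F_1,...,F_t, fix k ∈ [t], and let the data consist of independent samples, with B_j i.i.d. draws from Q_j for each j. Let q̂_{t,k} be the left (1−α)-quantile of the empirical CDF of the pooled samples from periods t−k+1,...,t (pooled size B_{t,k}). Then for any δ ∈ (0,1), with probability at least 1 − δ: |F_t(q̂_{t,k}) − (1−α)| ≤ φ(t,k) + (5/4)√(2α(1−α)log(2/δ)/B_{t,k}) + 4·log(2/δ)/B_{t,k}, where φ(t,k) = max_{t−k+1 ≤ j ≤ t} ‖F_j − F_t‖_∞. -/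

import Mathlib

open MeasureTheory ProbabilityTheory

noncomputable def Qminus (γ : ℝ) (F : ℝ → ℝ) : ℝ := sInf {x | γ ≤ F x}

open Real Finset

/-!
Let `F̄` be the average of the CDFs of the pooled samples. Since `|F_t - F̄| ≤ φ` pointwise, it
suffices that `|F̄ q̂ - (1 - α)| ≤ u` with probability `1 - δ`. By continuity there are `b`, `c`
with `F̄ b = 1 - α + u` and `F̄ c = 1 - α - u`, and `q̂` can only leave `[c, b]` if the empirical
CDF at `b` or at `c` deviates from `F̄` by `u`. The number of samples below a fixed point is a sum
of independent Bernoulli variables of total variance at most `B F̄ (1 - F̄)` (Cauchy–Schwarz), so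
Bernstein's inequality bounds each of the two deviation probabilities by `δ / 2`.
-/

lemma nonneg_of_hasDerivAt_of_map_zero {f f' : ℝ → ℝ} (hf : ∀ x, HasDerivAt f (f' x) x)
    (h0 : f 0 = 0) (hf' : ∀ x, 0 ≤ x → 0 ≤ f' x) {x : ℝ} (hx : 0 ≤ x) : 0 ≤ f x := by
  have hmono : MonotoneOn f (Set.Ici 0) :=
    monotoneOn_of_hasDerivWithinAt_nonneg (convex_Ici 0)
      (fun y _ => (hf y).continuousAt.continuousWithinAt)
      (fun y _ => (hf y).hasDerivWithinAt)
      (fun y hy => hf' y (interior_subset hy))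
  simpa [h0] using hmono Set.self_mem_Ici hx hx

lemma exp_le_one_add_add_sq_div_two_of_nonpos {x : ℝ} (hx : x ≤ 0) :
    exp x ≤ 1 + x + x ^ 2 / 2 := by
  have hderiv : ∀ y, HasDerivAt (fun y => 1 - y + y ^ 2 / 2 - exp (-y)) (-1 + y + exp (-y)) y :=
    fun y => ((((hasDerivAt_id' y).const_sub 1).add ((hasDerivAt_pow 2 y).div_const 2)).sub
      (hasDerivAt_neg y).exp).congr_deriv (by norm_num)
  have := nonneg_of_hasDerivAt_of_map_zero hderiv (by simp)
    (fun y _ => by linarith [add_one_le_exp (-y)]) (neg_nonneg.2 hx)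
  simp only [sub_neg_eq_add, neg_neg, even_two, Even.neg_pow] at this
  linarith

/-- Bennett's pointwise bound; for `0 ≤ y` it says that `(exp s - 1 - s) / s²` is nondecreasing. -/
lemma exp_mul_le_one_add_mul_add_sq_mul {l y : ℝ} (hl : 0 ≤ l) (hy : y ≤ 1) :
    exp (l * y) ≤ 1 + l * y + y ^ 2 * (exp l - 1 - l) := by
  rcases le_or_gt 0 y with hy0 | hy0
  · have hchord : ∀ s, exp (s * y) ≤ 1 + y * (exp s - 1) := by
      intro s
      have := convexOn_exp.2 (Set.mem_univ 0) (Set.mem_univ s) (sub_nonneg.2 hy) hy0 (by ring)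
      simp only [smul_eq_mul, mul_zero, zero_add, exp_zero, mul_one] at this
      rw [mul_comm]; linarith
    have hderiv : ∀ s, HasDerivAt (fun s => 1 + s * y + y ^ 2 * (exp s - 1 - s) - exp (s * y))
        (y * (1 + y * (exp s - 1) - exp (s * y))) s := fun s =>
      ((((hasDerivAt_id' s).mul_const y).const_add 1).add
        ((((hasDerivAt_exp s).sub_const 1).sub (hasDerivAt_id' s)).const_mul (y ^ 2))).sub
        (hasDerivAt_mul_const y).exp |>.congr_deriv (by ring)
    have := nonneg_of_hasDerivAt_of_map_zero hderiv (by simp)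
      (fun s _ => mul_nonneg hy0 (sub_nonneg.2 (hchord s))) hl
    linarith
  · have hquad := exp_le_one_add_add_sq_div_two_of_nonpos
      (mul_nonpos_of_nonneg_of_nonpos hl hy0.le)
    have := quadratic_le_exp_of_nonneg hl
    nlinarith [sq_nonneg y]

/-- The moment generating function of a Bernoulli(`p`) variable, in Bennett's form. -/
lemma one_add_mul_exp_sub_one_le {p l : ℝ} (hp0 : 0 ≤ p) (hp1 : p ≤ 1) (hl : 0 ≤ l) :
    1 + p * (exp l - 1) ≤ exp (l * p + p * (1 - p) * (exp l - 1 - l)) := by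
  have hneg := exp_mul_le_one_add_mul_add_sq_mul hl (y := -p) (by linarith)
  have hpos := exp_mul_le_one_add_mul_add_sq_mul hl (y := 1 - p) (by linarith)
  have hcentered : (1 - p) * exp (l * -p) + p * exp (l * (1 - p)) ≤
      1 + p * (1 - p) * (exp l - 1 - l) := by
    nlinarith [mul_le_mul_of_nonneg_left hneg (sub_nonneg.2 hp1),
      mul_le_mul_of_nonneg_left hpos hp0]
  calc 1 + p * (exp l - 1)
      = exp (l * p) * ((1 - p) * exp (l * -p) + p * exp (l * (1 - p))) := by
        have e₁ : exp (l * p) * exp (l * -p) = 1 := by rw [← exp_add]; simp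
        have e₂ : exp (l * p) * exp (l * (1 - p)) = exp l := by rw [← exp_add]; ring_nf
        linear_combination (-(1 - p)) * e₁ - p * e₂
    _ ≤ exp (l * p) * exp (p * (1 - p) * (exp l - 1 - l)) := by
        gcongr; linarith [add_one_le_exp (p * (1 - p) * (exp l - 1 - l))]
    _ = _ := (exp_add _ _).symm

lemma one_sub_div_three_mul_exp_sub_one_sub_le {l : ℝ} (hl : 0 ≤ l) :
    (1 - l / 3) * (exp l - 1 - l) ≤ l ^ 2 / 2 := by
  have hderiv₂ : ∀ s, HasDerivAt (fun s => s + (exp s - 1 - s) / 3 - (1 - s / 3) * (exp s - 1))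
      ((1 - (1 - s) * exp s) / 3) s := fun s =>
    ((hasDerivAt_id' s).add ((((hasDerivAt_exp s).sub_const 1).sub
      (hasDerivAt_id' s)).div_const 3)).sub
      ((((hasDerivAt_id' s).div_const 3).const_sub 1).mul ((hasDerivAt_exp s).sub_const 1))
      |>.congr_deriv (by ring)
  have hderiv₁ : ∀ s, HasDerivAt (fun s => s ^ 2 / 2 - (1 - s / 3) * (exp s - 1 - s))
      (s + (exp s - 1 - s) / 3 - (1 - s / 3) * (exp s - 1)) s := fun s =>
    ((hasDerivAt_pow 2 s).div_const 2).sub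
      ((((hasDerivAt_id' s).div_const 3).const_sub 1).mul
        (((hasDerivAt_exp s).sub_const 1).sub (hasDerivAt_id' s)))
      |>.congr_deriv (by norm_num; ring)
  have hderiv₂_nonneg : ∀ s, 0 ≤ (1 - (1 - s) * exp s) / 3 := fun s => by
    have := mul_le_mul_of_nonneg_right (add_one_le_exp (-s)) (exp_pos s).le
    rw [← exp_add, neg_add_cancel, exp_zero] at this
    linarith
  have := nonneg_of_hasDerivAt_of_map_zero hderiv₁ (by simp)
    (fun s hs => nonneg_of_hasDerivAt_of_map_zero hderiv₂ (by simp) (fun s _ => hderiv₂_nonneg s) hs) hl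
  linarith

/-- Optimizing the Chernoff parameter in Bennett's bound yields Bernstein's exponent. -/
lemma exists_neg_mul_add_mul_exp_sub_one_sub_le {V s : ℝ} (hV : 0 ≤ V) (hs : 0 < s) :
    ∃ l, 0 ≤ l ∧ -(l * s) + V * (exp l - 1 - l) ≤ -(s ^ 2 / (2 * (V + s / 3))) := by
  have hVs : 0 < V + s / 3 := by linarith
  obtain ⟨l, hl⟩ : ∃ l, l = s / (V + s / 3) := ⟨_, rfl⟩
  have hls : l * (V + s / 3) = s := by rw [hl, div_mul_cancel₀ s hVs.ne']
  refine ⟨l, hl ▸ by positivity, ?_⟩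
  have hg := one_sub_div_three_mul_exp_sub_one_sub_le (l := l) (hl ▸ by positivity)
  have hVeq : V = (1 - l / 3) * (V + s / 3) := by linear_combination (1 / 3 : ℝ) * hls
  have hsq : s ^ 2 / (2 * (V + s / 3)) = l * s / 2 := by
    rw [div_eq_iff (by positivity)]; linear_combination (-s) * hls
  rw [hsq, hVeq, mul_comm (1 - l / 3), mul_assoc]
  nlinarith [mul_le_mul_of_nonneg_left hg hVs.le]

section Bernstein

lemma exp_mul_indicator_one {Ω : Type*} (A : Set Ω) (l : ℝ) :
    (fun ω => exp (l * A.indicator 1 ω)) = fun ω => A.indicator (fun _ => exp l - 1) ω + 1 := by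
  ext ω; by_cases h : ω ∈ A <;> simp [h]

variable {Ω ι : Type*} [MeasurableSpace Ω] {μ : Measure Ω} [IsProbabilityMeasure μ]

lemma integrable_exp_mul_indicator_one {A : Set Ω} (hA : MeasurableSet A) (l : ℝ) :
    Integrable (fun ω => exp (l * A.indicator 1 ω)) μ := by
  rw [exp_mul_indicator_one]
  exact ((integrable_const _).indicator hA).add (integrable_const 1)

lemma mgf_indicator_one {A : Set Ω} (hA : MeasurableSet A) (l : ℝ) :
    mgf (A.indicator 1) μ l = 1 + μ.real A * (exp l - 1) := by
  rw [mgf, exp_mul_indicator_one,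
    integral_add ((integrable_const _).indicator hA) (integrable_const 1),
    integral_indicator_const _ hA]
  simp [add_comm]

/-- **Bernstein's inequality** for the number of independent events that occur. -/
theorem measureReal_sum_add_le_sum_indicator_le {A : ι → Set Ω} (hA : ∀ i, MeasurableSet (A i))
    (hind : iIndepFun (fun i => (A i).indicator (1 : Ω → ℝ)) μ) (W : Finset ι) {V s : ℝ}
    (hV : ∑ i ∈ W, μ.real (A i) * (1 - μ.real (A i)) ≤ V) (hs : 0 < s) :
    μ.real {ω | ∑ i ∈ W, μ.real (A i) + s ≤ ∑ i ∈ W, (A i).indicator 1 ω} ≤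
      exp (-(s ^ 2 / (2 * (V + s / 3)))) := by
  set p := fun i => μ.real (A i)
  set S := ∑ i ∈ W, (A i).indicator (1 : Ω → ℝ)
  have hp : ∀ i, 0 ≤ p i ∧ p i ≤ 1 := fun i => ⟨measureReal_nonneg, measureReal_le_one⟩
  have hvar : 0 ≤ ∑ i ∈ W, p i * (1 - p i) :=
    sum_nonneg fun i _ => mul_nonneg (hp i).1 (sub_nonneg.2 (hp i).2)
  obtain ⟨l, hl, hexp⟩ := exists_neg_mul_add_mul_exp_sub_one_sub_le (hvar.trans hV) hs
  have hmeas : ∀ i, Measurable ((A i).indicator (1 : Ω → ℝ)) :=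
    fun i => measurable_const.indicator (hA i)
  have hmgf :
      mgf S μ l ≤ exp (l * ∑ i ∈ W, p i + (∑ i ∈ W, p i * (1 - p i)) * (exp l - 1 - l)) := by
    rw [hind.mgf_sum hmeas, mul_sum, sum_mul, ← sum_add_distrib, exp_sum]
    exact prod_le_prod (fun i _ => mgf_nonneg) fun i _ => (mgf_indicator_one (hA i) l).trans_le
      (one_add_mul_exp_sub_one_le (hp i).1 (hp i).2 hl)
  have hint : Integrable (fun ω => exp (l * S ω)) μ :=
    hind.integrable_exp_mul_sum hmeas fun i _ => integrable_exp_mul_indicator_one (hA i) l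
  have hchernoff := measure_ge_le_exp_mul_mgf (∑ i ∈ W, p i + s) hl hint
  simp only [S, Finset.sum_apply] at hchernoff
  calc _ ≤ exp (-l * (∑ i ∈ W, p i + s)) * mgf S μ l := hchernoff
    _ ≤ exp (-l * (∑ i ∈ W, p i + s)) *
          exp (l * ∑ i ∈ W, p i + (∑ i ∈ W, p i * (1 - p i)) * (exp l - 1 - l)) := by gcongr
    _ = exp (-(l * s) + (∑ i ∈ W, p i * (1 - p i)) * (exp l - 1 - l)) := by
        rw [← exp_add]; congr 1; ring
    _ ≤ exp (-(l * s) + V * (exp l - 1 - l)) := by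
        gcongr; linarith [add_one_le_exp l]
    _ ≤ _ := exp_le_exp.2 hexp

theorem measureReal_sum_indicator_add_le_sum_le {A : ι → Set Ω} (hA : ∀ i, MeasurableSet (A i))
    (hind : iIndepFun (fun i => (A i).indicator (1 : Ω → ℝ)) μ) (W : Finset ι) {V s : ℝ}
    (hV : ∑ i ∈ W, μ.real (A i) * (1 - μ.real (A i)) ≤ V) (hs : 0 < s) :
    μ.real {ω | ∑ i ∈ W, (A i).indicator 1 ω + s ≤ ∑ i ∈ W, μ.real (A i)} ≤
      exp (-(s ^ 2 / (2 * (V + s / 3)))) := by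
  have hind' : iIndepFun (fun i => (A i)ᶜ.indicator (1 : Ω → ℝ)) μ := by
    simp_rw [Set.indicator_compl]
    exact hind.comp (fun _ x => 1 - x) fun _ => measurable_const.sub measurable_id
  have hV' : ∑ i ∈ W, μ.real (A i)ᶜ * (1 - μ.real (A i)ᶜ) ≤ V := by
    simp_rw [measureReal_compl (hA _), probReal_univ]
    convert hV using 2; ring
  convert measureReal_sum_add_le_sum_indicator_le (fun i => (hA i).compl) hind' W hV' hs using 2
  ext ω
  simp only [Set.mem_ofPred_eq, measureReal_compl (hA _), probReal_univ,
    Set.indicator_compl, Pi.sub_apply, Pi.one_apply, sum_sub_distrib]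
  constructor <;> intro h <;> linarith

end Bernstein

section EmpiricalCDF

variable {ι : Type*} {W : Finset ι} {x : ι → ℝ}

noncomputable def empiricalCDF (W : Finset ι) (x : ι → ℝ) (s : ℝ) : ℝ := #{i ∈ W | x i ≤ s} / #W

lemma monotone_empiricalCDF : Monotone (empiricalCDF W x) := fun a b hab => by
  unfold empiricalCDF
  gcongr

lemma exists_le_of_empiricalCDF_pos {s : ℝ} (h : 0 < empiricalCDF W x s) : ∃ i ∈ W, x i ≤ s := by
  have hcard : {i ∈ W | x i ≤ s}.Nonempty := by
    rw [← card_pos, Nat.pos_iff_ne_zero]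
    intro h0
    simp [empiricalCDF, h0] at h
  obtain ⟨i, hi⟩ := hcard
  exact ⟨i, (mem_filter.1 hi).1, (mem_filter.1 hi).2⟩

lemma empiricalCDF_sup' (hW : W.Nonempty) : empiricalCDF W x (W.sup' hW x) = 1 := by
  rw [empiricalCDF, filter_true_of_mem fun i hi => le_sup' x hi, div_self]
  exact_mod_cast hW.card_pos.ne'

lemma Qminus_empiricalCDF_le {γ b : ℝ} (hγ : 0 < γ) (h : γ ≤ empiricalCDF W x b) :
    Qminus γ (empiricalCDF W x) ≤ b := by
  refine csInf_le ?_ h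
  obtain ⟨m, hm⟩ := (W.finite_toSet.image x).bddBelow
  refine ⟨m, fun s hs => ?_⟩
  obtain ⟨i, hi, his⟩ := exists_le_of_empiricalCDF_pos (hγ.trans_le hs)
  exact (hm ⟨i, hi, rfl⟩).trans his

lemma le_Qminus_empiricalCDF (hW : W.Nonempty) {γ c : ℝ} (hγ : γ ≤ 1)
    (h : empiricalCDF W x c < γ) : c ≤ Qminus γ (empiricalCDF W x) :=
  le_csInf ⟨W.sup' hW x, by simpa [empiricalCDF_sup' hW] using hγ⟩ fun _ hy =>
    le_of_not_gt fun hyc => (h.trans_le hy).not_ge (monotone_empiricalCDF hyc.le)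

lemma empiricalCDF_eq_sum_indicator {Ω : Type*} {X : ι → Ω → ℝ} (ω : Ω) (s : ℝ) :
    empiricalCDF W (X · ω) s = (∑ i ∈ W, {ω | X i ω ≤ s}.indicator 1 ω) / #W := by
  rw [empiricalCDF, natCast_card_filter]
  simp [Set.indicator_apply]

end EmpiricalCDF

section AverageCDF

variable {Ω ι : Type*} [MeasurableSpace Ω] {μ : Measure Ω} {X : ι → Ω → ℝ} {W : Finset ι}

noncomputable def avgCDF (μ : Measure Ω) (X : ι → Ω → ℝ) (W : Finset ι) (s : ℝ) : ℝ :=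
  (∑ i ∈ W, cdf (μ.map (X i)) s) / #W

lemma avgCDF_nonneg (s : ℝ) : 0 ≤ avgCDF μ X W s :=
  div_nonneg (sum_nonneg fun _ _ => cdf_nonneg _ _) (Nat.cast_nonneg _)

lemma avgCDF_le_one (s : ℝ) : avgCDF μ X W s ≤ 1 :=
  div_le_one_of_le₀ ((sum_le_sum fun _ _ => cdf_le_one _ s).trans (by simp)) (Nat.cast_nonneg _)

lemma monotone_avgCDF : Monotone (avgCDF μ X W) := fun _ _ hab =>
  div_le_div_of_nonneg_right (sum_le_sum fun _ _ => monotone_cdf _ hab) (Nat.cast_nonneg _)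

lemma exists_avgCDF_eq (hW : W.Nonempty) (hcont : ∀ i ∈ W, Continuous (cdf (μ.map (X i))))
    {y : ℝ} (hy : y ∈ Set.Ioo 0 1) : ∃ s, avgCDF μ X W s = y := by
  have hN : (#W : ℝ) ≠ 0 := by exact_mod_cast hW.card_pos.ne'
  have htop : Filter.Tendsto (avgCDF μ X W) Filter.atTop (nhds 1) := by
    have := (tendsto_finsetSum W fun i _ => tendsto_cdf_atTop (μ.map (X i))).div_const (#W : ℝ)
    rwa [sum_const, nsmul_one, div_self hN] at this
  have hbot : Filter.Tendsto (avgCDF μ X W) Filter.atBot (nhds 0) := by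
    have := (tendsto_finsetSum W fun i _ => tendsto_cdf_atBot (μ.map (X i))).div_const (#W : ℝ)
    rwa [sum_const_zero, zero_div] at this
  exact mem_range_of_exists_le_of_exists_ge
    ((continuous_finsetSum W hcont).div_const _)
    ((hbot.eventually (eventually_lt_nhds hy.1)).exists.imp fun _ => le_of_lt)
    ((htop.eventually (eventually_gt_nhds hy.2)).exists.imp fun _ => le_of_lt)

end AverageCDF

lemma sum_mul_one_sub_le_sum_sub_sq_div_card {ι : Type*} (W : Finset ι) (f : ι → ℝ) :
    ∑ i ∈ W, f i * (1 - f i) ≤ ∑ i ∈ W, f i - (∑ i ∈ W, f i) ^ 2 / #W := by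
  rcases W.eq_empty_or_nonempty with rfl | hW
  · simp
  have hN : (0 : ℝ) < #W := by exact_mod_cast hW.card_pos
  have hcs : (∑ i ∈ W, f i) ^ 2 / #W ≤ ∑ i ∈ W, f i ^ 2 := by
    rw [div_le_iff₀ hN, mul_comm]; exact sq_sum_le_card_mul_sum_sq
  simp only [mul_one_sub, sum_sub_distrib, ← sq]
  linarith

lemma sq_mul_div_two_mul_add_eq {u v N : ℝ} (hN : N ≠ 0) :
    (u * N) ^ 2 / (2 * (N * v + u * N / 3)) = u ^ 2 * N / (2 * (v + u / 3)) := by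
  rw [show (u * N) ^ 2 = N * (u ^ 2 * N) by ring,
    show 2 * (N * v + u * N / 3) = N * (2 * (v + u / 3)) by ring, mul_div_mul_left _ _ hN]

lemma ProbabilityTheory.iIndepFun.indicator_le {Ω ι : Type*} [MeasurableSpace Ω] {μ : Measure Ω}
    {X : ι → Ω → ℝ} (hind : iIndepFun X μ) (s : ℝ) :
    iIndepFun (fun i => {ω | X i ω ≤ s}.indicator (1 : Ω → ℝ)) μ :=
  hind.comp (fun _ => (Set.Iic s).indicator 1) fun _ => measurable_one.indicator measurableSet_Iic

section Concentration

variable {Ω ι : Type*} [MeasurableSpace Ω] {μ : Measure Ω} [IsProbabilityMeasure μ]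
  {X : ι → Ω → ℝ} {W : Finset ι}

lemma cdf_map_eq_measureReal {Y : Ω → ℝ} (hY : Measurable Y) (s : ℝ) :
    cdf (μ.map Y) s = μ.real {ω | Y ω ≤ s} := by
  have := Measure.isProbabilityMeasure_map (μ := μ) hY.aemeasurable
  rw [cdf_eq_real, map_measureReal_apply hY measurableSet_Iic]
  rfl

lemma avgCDF_eq_sum_measureReal (hX : ∀ i, Measurable (X i)) (s : ℝ) :
    avgCDF μ X W s = (∑ i ∈ W, μ.real {ω | X i ω ≤ s}) / #W := by
  simp_rw [avgCDF, cdf_map_eq_measureReal (hX _)]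

lemma sum_measureReal_mul_one_sub_le (hX : ∀ i, Measurable (X i)) {s v : ℝ}
    (hv : avgCDF μ X W s * (1 - avgCDF μ X W s) ≤ v) :
    ∑ i ∈ W, μ.real {ω | X i ω ≤ s} * (1 - μ.real {ω | X i ω ≤ s}) ≤ #W * v := by
  refine (sum_mul_one_sub_le_sum_sub_sq_div_card W _).trans ?_
  rw [avgCDF_eq_sum_measureReal hX] at hv
  rcases W.eq_empty_or_nonempty with rfl | hW
  · simp
  have hN : (0 : ℝ) < #W := by exact_mod_cast hW.card_pos
  calc _ = #W * ((∑ i ∈ W, μ.real {ω | X i ω ≤ s}) / #W *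
        (1 - (∑ i ∈ W, μ.real {ω | X i ω ≤ s}) / #W)) := by field_simp
    _ ≤ #W * v := by gcongr

theorem measureReal_avgCDF_add_le_empiricalCDF_le (hW : W.Nonempty) (hX : ∀ i, Measurable (X i))
    (hind : iIndepFun X μ) {s u v : ℝ} (hu : 0 < u)
    (hv : avgCDF μ X W s * (1 - avgCDF μ X W s) ≤ v) :
    μ.real {ω | avgCDF μ X W s + u ≤ empiricalCDF W (X · ω) s} ≤
      exp (-(u ^ 2 * #W / (2 * (v + u / 3)))) := by
  have hN : (0 : ℝ) < #W := by exact_mod_cast hW.card_pos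
  rw [← sq_mul_div_two_mul_add_eq hN.ne']
  refine le_trans (measureReal_mono fun ω hω => ?_) (measureReal_sum_add_le_sum_indicator_le
    (fun i => measurableSet_le (hX i) measurable_const) (hind.indicator_le s) W
    (sum_measureReal_mul_one_sub_le hX hv) (by positivity))
  simp only [Set.mem_ofPred_eq, empiricalCDF_eq_sum_indicator, avgCDF_eq_sum_measureReal hX,
    div_add' _ _ _ hN.ne', div_le_div_iff_of_pos_right hN] at hω ⊢
  linarith

theorem measureReal_empiricalCDF_add_le_avgCDF_le (hW : W.Nonempty) (hX : ∀ i, Measurable (X i))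
    (hind : iIndepFun X μ) {s u v : ℝ} (hu : 0 < u)
    (hv : avgCDF μ X W s * (1 - avgCDF μ X W s) ≤ v) :
    μ.real {ω | empiricalCDF W (X · ω) s + u ≤ avgCDF μ X W s} ≤
      exp (-(u ^ 2 * #W / (2 * (v + u / 3)))) := by
  have hN : (0 : ℝ) < #W := by exact_mod_cast hW.card_pos
  rw [← sq_mul_div_two_mul_add_eq hN.ne']
  refine le_trans (measureReal_mono fun ω hω => ?_) (measureReal_sum_indicator_add_le_sum_le
    (fun i => measurableSet_le (hX i) measurable_const) (hind.indicator_le s) W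
    (sum_measureReal_mul_one_sub_le hX hv) (by positivity))
  simp only [Set.mem_ofPred_eq, empiricalCDF_eq_sum_indicator, avgCDF_eq_sum_measureReal hX,
    div_add' _ _ _ hN.ne', div_le_div_iff_of_pos_right hN] at hω ⊢
  linarith

end Concentration

section QuantileConcentration

variable {Ω ι : Type*} [MeasurableSpace Ω] {μ : Measure Ω} [IsProbabilityMeasure μ]
  {X : ι → Ω → ℝ} {W : Finset ι}

theorem measureReal_add_lt_avgCDF_Qminus_le (hW : W.Nonempty) (hX : ∀ i, Measurable (X i))
    (hind : iIndepFun X μ) (hcont : ∀ i ∈ W, Continuous (cdf (μ.map (X i)))) {γ u : ℝ}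
    (hγ : 0 < γ) (hu : 0 < u) :
    μ.real {ω | γ + u < avgCDF μ X W (Qminus γ (empiricalCDF W (X · ω)))} ≤
      exp (-(u ^ 2 * #W / (2 * (γ * (1 - γ) + u + u / 3)))) := by
  rcases le_or_gt 1 (γ + u) with hγu | hγu
  · have hempty : {ω | γ + u < avgCDF μ X W (Qminus γ (empiricalCDF W (X · ω)))} = ∅ :=
      Set.eq_empty_of_forall_notMem fun ω hω => (hω.trans_le (avgCDF_le_one _)).not_ge hγu
    simp [hempty, (exp_pos _).le]
  obtain ⟨b, hb⟩ := exists_avgCDF_eq hW hcont ⟨by linarith, hγu⟩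
  refine le_trans (measureReal_mono fun ω hω => ?_)
    (measureReal_empiricalCDF_add_le_avgCDF_le hW hX hind (s := b) hu (by rw [hb]; nlinarith))
  simp only [Set.mem_ofPred_eq, hb] at hω ⊢
  by_contra! h
  have := monotone_avgCDF (μ := μ) (X := X) (W := W)
    (Qminus_empiricalCDF_le hγ (by linarith : γ ≤ empiricalCDF W (X · ω) b))
  linarith

theorem measureReal_avgCDF_Qminus_lt_sub_le (hW : W.Nonempty) (hX : ∀ i, Measurable (X i))
    (hind : iIndepFun X μ) (hcont : ∀ i ∈ W, Continuous (cdf (μ.map (X i)))) {γ u : ℝ}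
    (hγ : γ ≤ 1) (hu : 0 < u) :
    μ.real {ω | avgCDF μ X W (Qminus γ (empiricalCDF W (X · ω))) < γ - u} ≤
      exp (-(u ^ 2 * #W / (2 * (γ * (1 - γ) + u + u / 3)))) := by
  rcases le_or_gt (γ - u) 0 with hγu | hγu
  · have hempty : {ω | avgCDF μ X W (Qminus γ (empiricalCDF W (X · ω))) < γ - u} = ∅ :=
      Set.eq_empty_of_forall_notMem fun ω hω => (hω.trans_le hγu).not_ge (avgCDF_nonneg _)
    simp [hempty, (exp_pos _).le]
  obtain ⟨c, hc⟩ := exists_avgCDF_eq hW hcont ⟨hγu, by linarith⟩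
  refine le_trans (measureReal_mono fun ω hω => ?_)
    (measureReal_avgCDF_add_le_empiricalCDF_le hW hX hind (s := c) hu (by rw [hc]; nlinarith))
  simp only [Set.mem_ofPred_eq, hc] at hω ⊢
  by_contra! h
  have := monotone_avgCDF (μ := μ) (X := X) (W := W) (le_Qminus_empiricalCDF hW hγ (by linarith))
  linarith

theorem one_sub_two_mul_exp_le_measureReal_abs_avgCDF_Qminus_sub_le (hW : W.Nonempty)
    (hX : ∀ i, Measurable (X i)) (hind : iIndepFun X μ)
    (hcont : ∀ i ∈ W, Continuous (cdf (μ.map (X i)))) {γ u : ℝ} (hγ : γ ∈ Set.Ioc 0 1)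
    (hu : 0 < u) :
    1 - 2 * exp (-(u ^ 2 * #W / (2 * (γ * (1 - γ) + u + u / 3)))) ≤
      μ.real {ω | |avgCDF μ X W (Qminus γ (empiricalCDF W (X · ω))) - γ| ≤ u} := by
  set q := fun ω => Qminus γ (empiricalCDF W (X · ω))
  have hcover : {ω | |avgCDF μ X W (q ω) - γ| ≤ u}ᶜ ⊆
      {ω | γ + u < avgCDF μ X W (q ω)} ∪ {ω | avgCDF μ X W (q ω) < γ - u} := fun ω hω => by
    simp only [Set.mem_compl_iff, Set.mem_union, Set.mem_ofPred_eq, abs_le, not_and_or,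
      not_le] at hω ⊢
    rcases hω with h | h
    · right; linarith
    · left; linarith
  have htotal := measureReal_union_le (μ := μ) {ω | |avgCDF μ X W (q ω) - γ| ≤ u}
    {ω | |avgCDF μ X W (q ω) - γ| ≤ u}ᶜ
  rw [Set.union_compl_self, probReal_univ] at htotal
  linarith [measureReal_mono (μ := μ) hcover, measureReal_union_le (μ := μ)
    {ω | γ + u < avgCDF μ X W (q ω)} {ω | avgCDF μ X W (q ω) < γ - u},
    measureReal_add_lt_avgCDF_Qminus_le hW hX hind hcont hγ.1 hu,
    measureReal_avgCDF_Qminus_lt_sub_le hW hX hind hcont hγ.2 hu]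

end QuantileConcentration

lemma le_sq_mul_div_of_eq {σ L N u : ℝ} (hσ : 0 ≤ σ) (hL : 0 < L) (hN : 0 < N)
    (hu : u = 5 / 4 * √(2 * σ * L / N) + 4 * L / N) :
    L ≤ u ^ 2 * N / (2 * (σ + u + u / 3)) := by
  obtain ⟨c, rfl⟩ : ∃ c, L = c * N := ⟨L / N, (div_mul_cancel₀ L hN.ne').symm⟩
  have hc : 0 < c := pos_of_mul_pos_left hL hN.le
  set a := √(2 * σ * (c * N) / N)
  have ha2 : a ^ 2 = 2 * σ * c := by
    rw [Real.sq_sqrt (by positivity), mul_div_assoc, mul_div_cancel_right₀ _ hN.ne']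
  have hu' : u = 5 / 4 * a + 4 * c := by rw [hu]; field_simp
  have ha : 0 ≤ a := Real.sqrt_nonneg _
  have hu0 : 0 < u := by rw [hu']; positivity
  rw [le_div_iff₀ (by positivity), hu']
  nlinarith [mul_nonneg hc.le ha, mul_nonneg (mul_nonneg hc.le ha) hN.le,
    mul_nonneg (mul_nonneg hc.le hc.le) hN.le, mul_nonneg (mul_nonneg hc.le hσ) hN.le]

lemma two_mul_exp_neg_le_of_eq {σ δ N u : ℝ} (hσ : 0 ≤ σ) (hδ0 : 0 < δ) (hδ2 : δ < 2)
    (hN : 0 < N) (hu : u = 5 / 4 * √(2 * σ * log (2 / δ) / N) + 4 * log (2 / δ) / N) :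
    2 * exp (-(u ^ 2 * N / (2 * (σ + u + u / 3)))) ≤ δ := by
  have hL : 0 < log (2 / δ) := log_pos (by rw [lt_div_iff₀ hδ0]; linarith)
  calc _ ≤ 2 * exp (-log (2 / δ)) := by gcongr; exact le_sq_mul_div_of_eq hσ hL hN hu
    _ = δ := by rw [exp_neg, exp_log (by positivity)]; field_simp

lemma abs_sub_sum_div_card_le {ι : Type*} {W : Finset ι} (hW : W.Nonempty) {f : ι → ℝ}
    {c r : ℝ} (h : ∀ i ∈ W, |f i - c| ≤ r) : |c - (∑ i ∈ W, f i) / #W| ≤ r := by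
  have hN : (0 : ℝ) < #W := by exact_mod_cast hW.card_pos
  have hlo := card_nsmul_le_sum W f (c - r) fun i hi => by linarith [(abs_le.1 (h i hi)).1]
  have hhi := sum_le_card_nsmul W f (c + r) fun i hi => by linarith [(abs_le.1 (h i hi)).2]
  rw [nsmul_eq_mul] at hlo hhi
  have hlo' : c - r ≤ (∑ i ∈ W, f i) / #W := by rw [le_div_iff₀ hN]; linarith
  have hhi' : (∑ i ∈ W, f i) / #W ≤ c + r := by rw [div_le_iff₀ hN]; linarith
  rw [abs_le]
  constructor <;> linarith

lemma le_iSup_iSup_ite {κ : Type*} [Finite κ] {P : κ → Prop} [DecidablePred P]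
    {g : κ → ℝ → ℝ} {C : ℝ} (hg : ∀ j s, g j s ≤ C) {j : κ} (hj : P j) (s : ℝ) :
    g j s ≤ ⨆ j, ⨆ s, if P j then g j s else 0 := by
  have hbdd : ∀ j, BddAbove (Set.range fun s => if P j then g j s else 0) := fun j =>
    ⟨max C 0, by
      rintro _ ⟨s, rfl⟩
      split_ifs
      exacts [le_max_of_le_left (hg j s), le_max_right _ _]⟩
  calc g j s = if P j then g j s else 0 := (if_pos hj).symm
    _ ≤ ⨆ s, if P j then g j s else 0 := le_ciSup (hbdd j) s
    _ ≤ _ := le_ciSup (f := fun j => ⨆ s, if P j then g j s else 0) (Set.finite_range _).bddAbove j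

theorem stmt12_general {Ω : Type*} [MeasurableSpace Ω] (μ : Measure Ω) [IsProbabilityMeasure μ]
    (t : ℕ) (ht : 0 < t) (B : Fin t → ℕ) (hB : ∀ j, 0 < B j)
    (U : ((j : Fin t) × Fin (B j)) → Ω → ℝ)
    (hmeas : ∀ p, Measurable (U p))
    (hind : iIndepFun U μ)
    (F : Fin t → ℝ → ℝ)
    (hF : ∀ (j : Fin t) (i : Fin (B j)) (s : ℝ),
      F j s = (μ {ω | U ⟨j, i⟩ ω ≤ s}).toReal)
    (hcont : ∀ j, Continuous (F j))
    (k : ℕ) (hk1 : 1 ≤ k)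
    (α δ : ℝ) (hα : α ∈ Set.Ioo (0 : ℝ) 1) (hδ : δ ∈ Set.Ioo (0 : ℝ) 1)
    (Btk : ℝ)
    (hBtk : Btk = ((Finset.univ.filter
      (fun p : (j : Fin t) × Fin (B j) => t - k ≤ p.1.val)).card : ℝ))
    (φ : ℝ)
    (hφ : φ = ⨆ j : Fin t, ⨆ s : ℝ,
      if t - k ≤ j.val then |F j s - F ⟨t - 1, Nat.sub_lt ht Nat.one_pos⟩ s| else 0) :
    1 - δ ≤ (μ {ω |
      |F ⟨t - 1, Nat.sub_lt ht Nat.one_pos⟩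
          (Qminus (1 - α) (fun s => ((Finset.univ.filter
            (fun p : (j : Fin t) × Fin (B j) =>
              t - k ≤ p.1.val ∧ U p ω ≤ s)).card : ℝ) / Btk))
        - (1 - α)| ≤
      φ + (5 / 4) * Real.sqrt (2 * α * (1 - α) * Real.log (2 / δ) / Btk) +
        4 * Real.log (2 / δ) / Btk}).toReal := by
  obtain ⟨hα0, hα1⟩ := hα
  set T : Fin t := ⟨t - 1, Nat.sub_lt ht Nat.one_pos⟩
  set W := Finset.univ.filter (fun p : (j : Fin t) × Fin (B j) => t - k ≤ p.1.val)
  subst hBtk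
  have hW : W.Nonempty := ⟨⟨T, ⟨0, hB T⟩⟩, mem_filter.2 ⟨mem_univ _, show t - k ≤ t - 1 by omega⟩⟩
  have hFU : ∀ p, F p.1 = cdf (μ.map (U p)) := fun p => funext fun s => by
    rw [cdf_map_eq_measureReal (hmeas p), hF p.1 p.2 s, measureReal_def]
  have hbias : ∀ s, |F T s - avgCDF μ U W s| ≤ φ := fun s => by
    have hF01 : ∀ j s, 0 ≤ F j s ∧ F j s ≤ 1 := fun j s =>
      hFU ⟨j, ⟨0, hB j⟩⟩ ▸ ⟨cdf_nonneg _ s, cdf_le_one _ s⟩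
    simp only [avgCDF, ← hFU]
    refine abs_sub_sum_div_card_le hW fun p hp => hφ ▸ le_iSup_iSup_ite (fun j s =>
      abs_sub_le_of_nonneg_of_le (hF01 j s).1 (hF01 j s).2 (hF01 T s).1 (hF01 T s).2)
      (mem_filter.1 hp).2 s
  set u := 5 / 4 * √(2 * α * (1 - α) * log (2 / δ) / #W) + 4 * log (2 / δ) / #W with hu
  have hu0 : 0 < u := by
    have : 0 < log (2 / δ) := log_pos (by rw [lt_div_iff₀ hδ.1]; linarith [hδ.2])
    positivity
  have hconc := one_sub_two_mul_exp_le_measureReal_abs_avgCDF_Qminus_sub_le hW hmeas hind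
    (fun p _ => hFU p ▸ hcont p.1) (γ := 1 - α) ⟨by linarith, by linarith⟩ hu0
  rw [show (1 - α) * (1 - (1 - α)) = α * (1 - α) by ring] at hconc
  have hexp := two_mul_exp_neg_le_of_eq (σ := α * (1 - α)) (N := #W) (u := u) (by nlinarith)
    hδ.1 (by linarith [hδ.2]) (by exact_mod_cast hW.card_pos) (by rw [hu, mul_assoc 2 α])
  rw [← measureReal_def]
  refine (by linarith : 1 - δ ≤ _).trans (hconc.trans (measureReal_mono fun ω hω => ?_))
  simp only [Set.mem_ofPred_eq, ← filter_filter] at hω ⊢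
  calc _ ≤ |F T _ - avgCDF μ U W _| + |avgCDF μ U W _ - (1 - α)| := abs_sub_le _ _ _
    _ ≤ φ + u := add_le_add (hbias _) hω
    _ = _ := by rw [hu]; ring

/-- Bias–variance decomposition for the sample quantile under temporal drift
(Theorem 3.1): with `B j` i.i.d. draws from `Q j` (CDF `F j`, continuous) in each period
`j`, all samples independent, and `q̂` the left `(1-α)`-quantile of the empirical CDF of
the samples pooled over the window of the last `k` periods (pooled size `B_{t,k}`),
with probability at least `1 - δ`,
`|F_t(q̂) - (1-α)| ≤ φ(t,k) + (5/4)√(2α(1-α)log(2/δ)/B_{t,k}) + 4 log(2/δ)/B_{t,k}`,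
where `φ(t,k) = max_{t-k+1 ≤ j ≤ t} ‖F j - F t‖_∞`. -/
theorem stmt12 {Ω : Type*} [MeasurableSpace Ω] (μ : Measure Ω) [IsProbabilityMeasure μ]
    (t : ℕ) (ht : 0 < t) (B : Fin t → ℕ) (hB : ∀ j, 0 < B j)
    (U : ((j : Fin t) × Fin (B j)) → Ω → ℝ)
    (hmeas : ∀ p, Measurable (U p))
    (hind : iIndepFun U μ)
    (F : Fin t → ℝ → ℝ)
    (hF : ∀ (j : Fin t) (i : Fin (B j)) (s : ℝ),
      F j s = (μ {ω | U ⟨j, i⟩ ω ≤ s}).toReal)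
    (hcont : ∀ j, Continuous (F j))
    (k : ℕ) (hk1 : 1 ≤ k) (hkt : k ≤ t)
    (α δ : ℝ) (hα : α ∈ Set.Ioo (0 : ℝ) 1) (hδ : δ ∈ Set.Ioo (0 : ℝ) 1)
    (Btk : ℝ)
    (hBtk : Btk = ((Finset.univ.filter
      (fun p : (j : Fin t) × Fin (B j) => t - k ≤ p.1.val)).card : ℝ))
    (φ : ℝ)
    (hφ : φ = ⨆ j : Fin t, ⨆ s : ℝ,
      if t - k ≤ j.val then |F j s - F ⟨t - 1, Nat.sub_lt ht Nat.one_pos⟩ s| else 0) :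
    1 - δ ≤ (μ {ω |
      |F ⟨t - 1, Nat.sub_lt ht Nat.one_pos⟩
          (Qminus (1 - α) (fun s => ((Finset.univ.filter
            (fun p : (j : Fin t) × Fin (B j) =>
              t - k ≤ p.1.val ∧ U p ω ≤ s)).card : ℝ) / Btk))
        - (1 - α)| ≤
      φ + (5 / 4) * Real.sqrt (2 * α * (1 - α) * Real.log (2 / δ) / Btk) +
        4 * Real.log (2 / δ) / Btk}).toReal :=
  stmt12_general μ t ht B hB U hmeas hind F hF hcont k hk1 α δ hα hδ Btk hBtk φ hφ
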